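/- arXiv:2111.08221 — 6 statements merged into one kernel-verified Lean document; each statement's English description precedes it below -/
import Mathlib

section
/- Under the setting of the tightness lemma with $p_1^\sharp \le p_2^\sharp$, the optimal $p_1^*$ satisfies $p_1^* = \max\{p_1^\sharp, p_2^* + \lambda(p_1^\sharp - p_2^\sharp)\}$ and $p_2^* = \min\{p_2^\sharp, p_1^* + \lambda(p_2^\sharp - p_1^\sharp)\}$. -/
/-- Characterization of the constrained optimal prices via max/min formulas. -/
theorem constrained_opt_max_min_formula
    (pl pu : ℝ) (R1 R2 : ℝ → ℝ) (p1s p2s : ℝ) (lam : ℝ)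
    (hpl : pl ≤ pu)
    (hp1s : p1s ∈ Set.Icc pl pu) (hp2s : p2s ∈ Set.Icc pl pu)
    (hord : p1s ≤ p2s)
    (hR1inc : ∀ x y, pl ≤ x → x ≤ y → y ≤ p1s → R1 x ≤ R1 y)
    (hR1dec : ∀ x y, p1s ≤ x → x ≤ y → y ≤ pu → R1 y ≤ R1 x)
    (hR1uniq : ∀ x ∈ Set.Icc pl pu, x ≠ p1s → R1 x < R1 p1s)
    (hR2inc : ∀ x y, pl ≤ x → x ≤ y → y ≤ p2s → R2 x ≤ R2 y)
    (hR2dec : ∀ x y, p2s ≤ x → x ≤ y → y ≤ pu → R2 y ≤ R2 x)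
    (hR2uniq : ∀ x ∈ Set.Icc pl pu, x ≠ p2s → R2 x < R2 p2s)
    -- strict monotonicity on the middle interval
    (hR1strict : ∀ x y, p1s ≤ x → x < y → y ≤ p2s → R1 y < R1 x)
    (hR2strict : ∀ x y, p1s ≤ x → x < y → y ≤ p2s → R2 x < R2 y)
    (hlam : 0 < lam) (hlam1 : lam < 1)
    (p1star p2star : ℝ)
    (hp1star : p1star ∈ Set.Icc pl pu) (hp2star : p2star ∈ Set.Icc pl pu)
    (hfeas : |p1star - p2star| ≤ lam * |p1s - p2s|)
    (hopt : ∀ q1 q2, q1 ∈ Set.Icc pl pu → q2 ∈ Set.Icc pl pu →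
      |q1 - q2| ≤ lam * |p1s - p2s| → R1 q1 + R2 q2 ≤ R1 p1star + R2 p2star) :
    p1star = max p1s (p2star + lam * (p1s - p2s)) ∧
      p2star = min p2s (p1star + lam * (p2s - p1s)) := by
  obtain ⟨hpl1, hpu1⟩ := hp1s
  obtain ⟨hpl2, hpu2⟩ := hp2s
  obtain ⟨hplA, hpuA⟩ := hp1star
  obtain ⟨hplB, hpuB⟩ := hp2star
  have habs : |p1s - p2s| = p2s - p1s := by
    rw [abs_sub_comm]; exact abs_of_nonneg (by linarith)
  rw [habs] at hfeas hopt
  have hfe := abs_le.mp hfeas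
  rcases eq_or_lt_of_le hord with heq | hlt
  · -- degenerate case p1s = p2s
    subst heq
    have hz : lam * (p1s - p1s) = 0 := by ring
    have hAB : p1star = p2star := by
      have h1 := hfe.1; have h2 := hfe.2; linarith
    have hval := hopt p1s p1s ⟨hpl1, hpu1⟩ ⟨hpl1, hpu1⟩ (by simp)
    have hA1 : p1star = p1s := by
      by_contra hne
      have e1 := hR1uniq p1star ⟨hplA, hpuA⟩ hne
      have e2 := hR2uniq p2star ⟨hplB, hpuB⟩ (by rw [← hAB]; exact hne)
      linarith
    have hB1 : p2star = p1s := hAB.symm.trans hA1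
    constructor
    · rw [hA1, hB1]; simp
    · rw [hA1, hB1]; simp
  · -- main case p1s < p2s
    have hc0 : 0 < lam * (p2s - p1s) := mul_pos hlam (by linarith)
    have hcd : lam * (p2s - p1s) < p2s - p1s := by nlinarith
    -- H1 : p1s ≤ p1star
    have h1 : p1s ≤ p1star := by
      by_contra h; push_neg at h
      set q2 := p2star + (p1s - p1star) with hq2def
      have hq2le : q2 ≤ p2s := by have := hfe.1; simp only [hq2def]; linarith
      have hq2mem : q2 ∈ Set.Icc pl pu :=
        ⟨by simp only [hq2def]; linarith, le_trans hq2le hpu2⟩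
      have hfq : |p1s - q2| ≤ lam * (p2s - p1s) := by
        have e : p1s - q2 = p1star - p2star := by simp only [hq2def]; ring
        rw [e]; exact hfeas
      have hR2le : R2 p2star ≤ R2 q2 :=
        hR2inc p2star q2 hplB (by simp only [hq2def]; linarith) hq2le
      have hR1lt : R1 p1star < R1 p1s := hR1uniq p1star ⟨hplA, hpuA⟩ (ne_of_lt h)
      have := hopt p1s q2 ⟨hpl1, hpu1⟩ hq2mem hfq
      linarith
    -- H2 : p2star ≤ p2s
    have h2 : p2star ≤ p2s := by
      by_contra h; push_neg at h
      set q1 := p1star - (p2star - p2s) with hq1def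
      have hq1ge : p1s ≤ q1 := by have := hfe.1; simp only [hq1def]; linarith
      have hq1mem : q1 ∈ Set.Icc pl pu :=
        ⟨le_trans hpl1 hq1ge, by simp only [hq1def]; linarith⟩
      have hfq : |q1 - p2s| ≤ lam * (p2s - p1s) := by
        have e : q1 - p2s = p1star - p2star := by simp only [hq1def]; ring
        rw [e]; exact hfeas
      have hR1le : R1 p1star ≤ R1 q1 :=
        hR1dec q1 p1star hq1ge (by simp only [hq1def]; linarith) hpuA
      have hR2lt : R2 p2star < R2 p2s := hR2uniq p2star ⟨hplB, hpuB⟩ (ne_of_gt h)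
      have := hopt q1 p2s hq1mem ⟨hpl2, hpu2⟩ hfq
      linarith
    -- H4 : tightness
    have h4 : p2star = p1star + lam * (p2s - p1s) := by
      have hle : p2star ≤ p1star + lam * (p2s - p1s) := by have := hfe.1; linarith
      by_contra hne
      have hlt4 : p2star < p1star + lam * (p2s - p1s) := lt_of_le_of_ne hle hne
      rcases lt_or_eq_of_le h2 with hB | hB
      · -- p2star < p2s : push p2star up
        set q2 := min p2s (p1star + lam * (p2s - p1s)) with hq2def
        have hq2gt : p2star < q2 := lt_min hB hlt4
        have hq2le : q2 ≤ p2s := min_le_left _ _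
        have hq2mem : q2 ∈ Set.Icc pl pu :=
          ⟨le_trans hplB hq2gt.le, le_trans hq2le hpu2⟩
        have hfq : |p1star - q2| ≤ lam * (p2s - p1s) := by
          refine abs_le.mpr ⟨?_, ?_⟩
          · have := min_le_right p2s (p1star + lam * (p2s - p1s)); linarith
          · have := hfe.2; linarith
        have hR2lt : R2 p2star < R2 q2 := by
          rcases le_or_gt p1s p2star with h | h
          · exact hR2strict p2star q2 h hq2gt hq2le
          · have e1 : R2 p2star ≤ R2 p1s := hR2inc p2star p1s hplB h.le hord
            have hq2gt1 : p1s < q2 := lt_min hlt (by linarith)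
            have e2 : R2 p1s < R2 q2 := hR2strict p1s q2 le_rfl hq2gt1 hq2le
            linarith
        have := hopt p1star q2 ⟨hplA, hpuA⟩ hq2mem hfq
        linarith
      · -- p2star = p2s : push p1star down
        have h1lt : p1s < p1star := by
          rcases lt_or_eq_of_le h1 with h | h
          · exact h
          · exfalso; have := hfe.1; linarith
        set q1 := max p1s (p2s - lam * (p2s - p1s)) with hq1def
        have hq1lt : q1 < p1star := max_lt h1lt (by rw [hB] at hlt4; linarith)
        have hq1lt2 : q1 < p2s := max_lt hlt (by linarith)
        have hq1ge : p1s ≤ q1 := le_max_left _ _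
        have hq1mem : q1 ∈ Set.Icc pl pu :=
          ⟨le_trans hpl1 hq1ge, le_trans hq1lt2.le hpu2⟩
        have hfq : |q1 - p2s| ≤ lam * (p2s - p1s) := by
          refine abs_le.mpr ⟨?_, ?_⟩
          · have := le_max_right p1s (p2s - lam * (p2s - p1s)); linarith
          · linarith
        have hR1lt : R1 p1star < R1 q1 := by
          rcases le_or_gt p1star p2s with h | h
          · exact hR1strict q1 p1star hq1ge hq1lt h
          · have e1 : R1 p1star ≤ R1 p2s := hR1dec p2s p1star hord h.le hpuA
            have e2 : R1 p2s < R1 q1 := hR1strict q1 p2s hq1ge hq1lt2 le_rfl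
            linarith
        have hval := hopt q1 p2s hq1mem ⟨hpl2, hpu2⟩ hfq
        rw [← hB] at hval
        linarith
    constructor
    · have e : p2star + lam * (p1s - p2s) = p1star := by rw [h4]; ring
      rw [e]
      exact (max_eq_right h1).symm
    · have e : p1star + lam * (p2s - p1s) = p2star := h4.symm
      rw [e]
      exact (min_eq_right h2).symm
end

section
/- With $R_1(p) = \frac14 - \frac1A(p-1-\frac{\sqrt h}{4})^2$ and the piecewise $R_2(p)$ as defined (first piece $\frac14 - \frac{1}{2A}(p-1+\frac{\sqrt h}{4})^2$ on $[1, 1+\frac{5\sqrt h}{4})$, second piece $\frac14 - \frac{3}{2A}(p-1-\frac{3\sqrt h}{4})^2 - \frac{3h}{4A}$ on $[1+\frac{5\sqrt h}{4}, 1+\frac{7\sqrt h}{4})$), for every $p \in [1, 1+\frac{7\sqrt h}{4}]$ it holds that $|R_1(p) - R_2(p)| \le \frac{h}{4A}$. -/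
/-- The hard-instance profit curves `R1` and `R2` are within `h/(4A)` of each
other on `[1, 1 + 7√h/4]`. -/
theorem hard_instance_R1_R2_close
    (A h : ℝ) (hA : 20 ≤ A) (hh0 : 0 < h) (hh1 : h < 0.01)
    (R1 R2 : ℝ → ℝ)
    (hR1 : ∀ p, R1 p = 1/4 - (1/A) * (p - 1 - Real.sqrt h / 4) ^ 2)
    (hR2 : ∀ p, R2 p =
      if p < 1 + 5 * Real.sqrt h / 4 then
        1/4 - (1/(2*A)) * (p - 1 + Real.sqrt h / 4) ^ 2
      else
        1/4 - (3/(2*A)) * (p - 1 - 3 * Real.sqrt h / 4) ^ 2 - 3 * h / (4 * A)) :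
    ∀ p ∈ Set.Icc (1:ℝ) (1 + 7 * Real.sqrt h / 4),
      |R1 p - R2 p| ≤ h / (4 * A) := by
  intro p hp
  obtain ⟨hp1, hp2⟩ := hp
  have hA0 : (0 : ℝ) < A := by linarith
  set s := Real.sqrt h with hs_def
  have hs0 : 0 < s := Real.sqrt_pos.mpr hh0
  have hs2 : s ^ 2 = h := Real.sq_sqrt hh0.le
  rw [hR1, hR2]
  by_cases hc : p < 1 + 5 * s / 4
  · rw [if_pos hc]
    have e : (1/4 - (1/A) * (p - 1 - s/4)^2) - (1/4 - (1/(2*A)) * (p - 1 + s/4)^2)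
        = (-(p-1)^2 + 3*(p-1)*s/2 - s^2/16) / (2*A) := by
      field_simp; ring
    rw [e, abs_div, abs_of_pos (by linarith : (0:ℝ) < 2*A)]
    have hx : |(-(p-1)^2 + 3*(p-1)*s/2 - s^2/16)| ≤ h/2 := by
      rw [abs_le]
      constructor
      · nlinarith [mul_nonneg (by linarith : (0:ℝ) ≤ p - 1) (by linarith : (0:ℝ) ≤ 3*s/2 - (p-1))]
      · nlinarith [sq_nonneg (p - 1 - 3*s/4)]
    have : h / (4*A) = (h/2) / (2*A) := by ring
    rw [this]
    gcongr
  · rw [if_neg hc]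
    push_neg at hc
    have e : (1/4 - (1/A) * (p - 1 - s/4)^2) -
        (1/4 - (3/(2*A)) * (p - 1 - 3*s/4)^2 - 3*h/(4*A))
        = ((p - 1 - 7*s/4)^2 + (3*h/2 - 3*s^2/2)) / (2*A) := by
      field_simp; ring
    rw [e]
    rw [abs_div, abs_of_pos (by linarith : (0:ℝ) < 2*A)]
    have hx : |(p - 1 - 7*s/4)^2 + (3*h/2 - 3*s^2/2)| ≤ h/2 := by
      rw [hs2]
      rw [abs_le]
      constructor
      · nlinarith [sq_nonneg (p - 1 - 7*s/4)]
      · nlinarith [sq_nonneg (p - 1 - 3*s/2)]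
    have : h / (4*A) = (h/2) / (2*A) := by ring
    rw [this]
    gcongr
end

section
/- With demand functions $d_i(p) = R_i(p)/p$ where $R_1, R_2$ are the hard-instance profit functions (as defined, with $A \in [20,30]$, $h \in (0,0.01)$), for every $p \in [1, 1 + \frac{7\sqrt h}{4}]$ it holds that $|d_1(p) - d_2(p)| \le \frac{h}{4A}$. -/
/-- The hard-instance demand functions `d1 = R1/p` and `d2 = R2/p` are within
`h/(4A)` of each other on `[1, 1 + 7√h/4]`. -/
theorem hard_instance_demands_close
    (A h : ℝ) (hA1 : 20 ≤ A) (hA2 : A ≤ 30) (hh0 : 0 < h) (hh1 : h < 0.01)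
    (R1 R2 d1 d2 : ℝ → ℝ)
    (hR1 : ∀ p, R1 p = 1/4 - (1/A) * (p - 1 - Real.sqrt h / 4) ^ 2)
    (hR2 : ∀ p, R2 p =
      if p < 1 + 5 * Real.sqrt h / 4 then
        1/4 - (1/(2*A)) * (p - 1 + Real.sqrt h / 4) ^ 2
      else
        1/4 - (3/(2*A)) * (p - 1 - 3 * Real.sqrt h / 4) ^ 2 - 3 * h / (4 * A))
    (hd1 : ∀ p, d1 p = R1 p / p)
    (hd2 : ∀ p, d2 p = R2 p / p) :
    ∀ p ∈ Set.Icc (1:ℝ) (1 + 7 * Real.sqrt h / 4),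
      |d1 p - d2 p| ≤ h / (4 * A) := by
  intro p hp
  obtain ⟨hp1, hp2⟩ := hp
  have hA0 : (0:ℝ) < A := by linarith
  have h2A : (0:ℝ) < 2 * A := by linarith
  have hp0 : (0:ℝ) < p := by linarith
  set s := Real.sqrt h with hs_def
  have hs2 : s ^ 2 = h := Real.sq_sqrt hh0.le
  have hs0 : 0 ≤ s := Real.sqrt_nonneg h
  have key : |R1 p - R2 p| ≤ h / (4 * A) := by
    rw [hR1, hR2]
    split_ifs with hc
    · have e : (1/4 - (1/A) * (p - 1 - s / 4) ^ 2)
          - (1/4 - (1/(2*A)) * (p - 1 + s / 4) ^ 2)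
          = (-((p-1)^2 - (3/2)*s*(p-1) + s^2/16)) / (2*A) := by
        field_simp
        ring
      rw [e, abs_div, abs_of_pos h2A]
      have hnum : |(-((p-1)^2 - (3/2)*s*(p-1) + s^2/16))| ≤ h / 2 := by
        rw [abs_le]
        constructor
        · nlinarith [sq_nonneg (p - 1 - 3*s/4),
            mul_nonneg (by linarith : (0:ℝ) ≤ p - 1) (by linarith : (0:ℝ) ≤ 3*s/2 - (p-1))]
        · nlinarith [sq_nonneg (p - 1 - 3*s/4),
            mul_nonneg (by linarith : (0:ℝ) ≤ p - 1) (by linarith : (0:ℝ) ≤ 3*s/2 - (p-1))]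
      calc |(-((p-1)^2 - (3/2)*s*(p-1) + s^2/16))| / (2*A)
          ≤ (h/2) / (2*A) := by gcongr
        _ = h / (4*A) := by ring
    · push_neg at hc
      have e : (1/4 - (1/A) * (p - 1 - s / 4) ^ 2)
          - (1/4 - (3/(2*A)) * (p - 1 - 3 * s / 4) ^ 2 - 3 * h / (4 * A))
          = ((p - 1 - 7*s/4)^2) / (2*A) := by
        rw [← hs2]
        field_simp
        ring
      rw [e, abs_div, abs_of_pos h2A]
      have hnum : |(p - 1 - 7*s/4)^2| ≤ h / 2 := by
        rw [abs_of_nonneg (sq_nonneg _)]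
        nlinarith [sq_nonneg s]
      calc |(p - 1 - 7*s/4)^2| / (2*A) ≤ (h/2) / (2*A) := by gcongr
        _ = h / (4*A) := by ring
  calc |d1 p - d2 p| = |R1 p - R2 p| / p := by
        rw [hd1, hd2, div_sub_div_same, abs_div, abs_of_pos hp0]
    _ ≤ |R1 p - R2 p| := div_le_self (abs_nonneg _) hp1
    _ ≤ h / (4 * A) := key
end

section
/- For the hard instance $\mathcal{I}$ with profit curves $R_1(p) = \frac14 - \frac1A(p - p_1^\sharp)^2$ (peak $p_1^\sharp = 1 + \frac{\sqrt h}{4}$) and $R_3(p) = \frac18 - \frac1A(p - 2)^2$ (peak $p_3^\sharp = 2$) on $[1,2]$, and fairness parameter $\lambda \in (0,1)$, the maximizer of $R_1(p_1) + R_3(p_3)$ over $p_1, p_3 \in [1,2]$ subject to $|p_1 - p_3| \le \lambda(p_3^\sharp - p_1^\sharp)$ is given by $p_1^* = \frac{1+\lambda}{2} p_1^\sharp + \frac{1-\lambda}{2} p_3^\sharp$ and $p_3^* = \frac{1-\lambda}{2} p_1^\sharp + \frac{1+\lambda}{2} p_3^\sharp$. -/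
lemma aux_sq_bound (x y c : ℝ) (h1 : 2 * c ≤ x - y) (h2 : 0 ≤ x - y + 2 * c) :
    c ^ 2 + (-c) ^ 2 ≤ x ^ 2 + y ^ 2 := by
  nlinarith [sq_nonneg (x + y), mul_nonneg (sub_nonneg.mpr h1) h2]

/-- The fairness-aware clairvoyant solution of the hard instance `I`. -/
theorem hard_instance_constrained_optimum
    (A h lam : ℝ) (hA : 1 ≤ A) (hh0 : 0 < h) (hh1 : h < 0.01)
    (hlam0 : 0 < lam) (hlam1 : lam < 1)
    (R1 R3 : ℝ → ℝ) (p1s p3s : ℝ)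
    (hp1s : p1s = 1 + Real.sqrt h / 4) (hp3s : p3s = 2)
    (hR1 : ∀ p, R1 p = 1/4 - (1/A) * (p - p1s) ^ 2)
    (hR3 : ∀ p, R3 p = 1/8 - (1/A) * (p - p3s) ^ 2)
    (p1star p3star : ℝ)
    (hp1star : p1star = (1 + lam) / 2 * p1s + (1 - lam) / 2 * p3s)
    (hp3star : p3star = (1 - lam) / 2 * p1s + (1 + lam) / 2 * p3s) :
    p1star ∈ Set.Icc (1:ℝ) 2 ∧ p3star ∈ Set.Icc (1:ℝ) 2 ∧
      |p1star - p3star| ≤ lam * (p3s - p1s) ∧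
      ∀ q1 q3, q1 ∈ Set.Icc (1:ℝ) 2 → q3 ∈ Set.Icc (1:ℝ) 2 →
        |q1 - q3| ≤ lam * (p3s - p1s) →
        R1 q1 + R3 q3 ≤ R1 p1star + R3 p3star := by
  have hs0 : 0 ≤ Real.sqrt h := Real.sqrt_nonneg h
  have hs2 : Real.sqrt h ^ 2 = h := Real.sq_sqrt hh0.le
  have hs1 : Real.sqrt h < 1/10 := by nlinarith
  set s := Real.sqrt h with hsdef
  have hA0 : (0:ℝ) < A := lt_of_lt_of_le one_pos hA
  refine ⟨⟨?_, ?_⟩, ⟨?_, ?_⟩, ?_, ?_⟩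
  · rw [hp1star, hp1s, hp3s]; nlinarith
  · rw [hp1star, hp1s, hp3s]; nlinarith
  · rw [hp3star, hp1s, hp3s]; nlinarith
  · rw [hp3star, hp1s, hp3s]; nlinarith
  · rw [abs_le]; constructor
    · rw [hp1star, hp3star, hp1s, hp3s]; nlinarith
    · rw [hp1star, hp3star, hp1s, hp3s]; nlinarith
  · rintro q1 q3 ⟨hq11, hq12⟩ ⟨hq31, hq32⟩ hq
    rw [abs_le] at hq
    obtain ⟨hqa, hqb⟩ := hq
    have hd : 0 < p3s - p1s := by rw [hp1s, hp3s]; nlinarith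
    have e1 : p1star - p1s = (1 - lam) / 2 * (p3s - p1s) := by rw [hp1star]; ring
    have e3 : p3star - p3s = -((1 - lam) / 2 * (p3s - p1s)) := by rw [hp3star]; ring
    have hc : (1 - lam) * (p3s - p1s) ≤ (q1 - p1s) - (q3 - p3s) := by nlinarith
    have hc2 : 0 ≤ (q1 - p1s) - (q3 - p3s) + (1 - lam) * (p3s - p1s) := by nlinarith
    have key : (p1star - p1s) ^ 2 + (p3star - p3s) ^ 2 ≤
        (q1 - p1s) ^ 2 + (q3 - p3s) ^ 2 := by
      rw [e1, e3]
      exact aux_sq_bound (q1 - p1s) (q3 - p3s) ((1 - lam) / 2 * (p3s - p1s))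
        (by linarith) (by linarith)
    have hAi : (0:ℝ) ≤ 1 / A := by positivity
    have := mul_le_mul_of_nonneg_left key hAi
    rw [hR1, hR1, hR3, hR3]
    linarith [this]
end

section
/- In the hard instance $\mathcal{I}$ (with $R_1, R_3$ as above, $h \le \epsilon^4/400$, $\lambda \in (\epsilon, 1-\epsilon)$, $A \ge 1$), for any prices $p_1 \in [1, 1 + \frac{7\sqrt h}{4}]$ and $p_3 \in [1,2]$ with $|p_1 - p_3| \le \lambda(p_3^\sharp - p_1^\sharp)$, it holds that $[R_1(p_1^*) + R_3(p_3^*)] - [R_1(p_1) + R_3(p_3)] \ge \frac{\epsilon^2}{4A}$. -/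
set_option maxHeartbeats 1000000


/-- The price of a cheap first-group price: any fairness-aware pricing
strategy that is cheap for the first group incurs regret at least `ε²/(4A)`
in the hard instance `I`. -/
theorem cheap_first_group_price_regret
    (A h lam eps : ℝ) (hA : 1 ≤ A)
    (heps0 : 0 < eps) (heps1 : eps < 1)
    (hlam0 : eps < lam) (hlam1 : lam < 1 - eps)
    (hh0 : 0 < h) (hh : h ≤ eps ^ 4 / 400)
    (R1 R3 : ℝ → ℝ) (p1s p3s : ℝ)
    (hp1s : p1s = 1 + Real.sqrt h / 4) (hp3s : p3s = 2)
    (hR1 : ∀ p, R1 p = 1/4 - (1/A) * (p - p1s) ^ 2)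
    (hR3 : ∀ p, R3 p = 1/8 - (1/A) * (p - p3s) ^ 2)
    (p1star p3star : ℝ)
    (hp1star : p1star = (1 + lam) / 2 * p1s + (1 - lam) / 2 * p3s)
    (hp3star : p3star = p1star + lam * (p3s - p1s))
    (p1 p3 : ℝ)
    (hp1 : p1 ∈ Set.Icc (1:ℝ) (1 + 7 * Real.sqrt h / 4))
    (hp3 : p3 ∈ Set.Icc (1:ℝ) 2)
    (hfair : |p1 - p3| ≤ lam * (p3s - p1s)) :
    (R1 p1star + R3 p3star) - (R1 p1 + R3 p3) ≥ eps ^ 2 / (4 * A) := by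
  set s := Real.sqrt h with hs
  have hs0 : 0 ≤ s := Real.sqrt_nonneg h
  have hs2 : s ^ 2 = h := Real.sq_sqrt hh0.le
  have hse : s ≤ eps ^ 2 / 20 := by
    nlinarith [sq_nonneg (s - eps ^ 2 / 20), sq_nonneg eps]
  have hA0 : (0:ℝ) < A := lt_of_lt_of_le one_pos hA
  obtain ⟨hp1l, hp1u⟩ := hp1
  obtain ⟨hp3l, hp3u⟩ := hp3
  have hfair' : p3 - p1 ≤ lam * (p3s - p1s) := (abs_le.mp (abs_sub_comm p1 p3 ▸ hfair)).2
  have hD : p3s - p1s = 1 - s / 4 := by rw [hp1s, hp3s]; ring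
  -- key inequality on the numerator
  have hu : eps < 1 - lam := by linarith
  have hc : 2 - p3 ≥ (1 - lam) - 7 * s / 4 := by
    rw [hD] at hfair'
    nlinarith [hs0, hlam1, heps0]
  have hc0 : (0:ℝ) < (1 - lam) - 7 * s / 4 := by nlinarith [sq_nonneg eps]
  have hu0 : 0 < 1 - lam := by linarith
  have hu1 : 1 - lam ≤ 1 := by linarith
  have hs1 : s ≤ 1 := by nlinarith
  have h1 : (p3 - 2) ^ 2 ≥ ((1 - lam) - 7 * s / 4) ^ 2 := by
    nlinarith [hc, hc0]
  have h3 : (1 - s / 4) ^ 2 ≤ 1 := by nlinarith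
  have h4 : (1 - lam) ^ 2 * (1 - s / 4) ^ 2 ≤ (1 - lam) ^ 2 := by
    calc (1 - lam) ^ 2 * (1 - s / 4) ^ 2 ≤ (1 - lam) ^ 2 * 1 :=
          mul_le_mul_of_nonneg_left h3 (sq_nonneg _)
      _ = (1 - lam) ^ 2 := mul_one _
  have h5 : ((1 - lam) - 7 * s / 4) ^ 2 ≥ (1 - lam) ^ 2 / 2 + eps ^ 2 / 4 := by
    nlinarith [mul_pos heps0 (sub_pos.mpr hu), mul_nonneg hs0 hu0.le,
      mul_nonneg hs0 (sub_nonneg.mpr hu1), sq_nonneg s, hse, heps0.le]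
  have hkey : (p1 - p1s) ^ 2 + (p3 - 2) ^ 2
      ≥ (1 - lam) ^ 2 * (1 - s / 4) ^ 2 / 2 + eps ^ 2 / 4 := by
    nlinarith [sq_nonneg (p1 - p1s)]
  -- reduce the goal
  rw [hR1, hR1, hR3, hR3]
  have hexp : (1/4 - (1/A) * (p1star - p1s) ^ 2 + (1/8 - (1/A) * (p3star - p3s) ^ 2))
      - (1/4 - (1/A) * (p1 - p1s) ^ 2 + (1/8 - (1/A) * (p3 - p3s) ^ 2))
      = (1/A) * ((p1 - p1s) ^ 2 + (p3 - 2) ^ 2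
          - (1 - lam) ^ 2 * (1 - s / 4) ^ 2 / 2) := by
    rw [hp3star, hp1star, hp1s, hp3s]
    field_simp
    ring
  rw [hexp, ge_iff_le, show eps ^ 2 / (4 * A) = (1/A) * (eps ^ 2 / 4) by field_simp]
  have : (0:ℝ) ≤ 1/A := by positivity
  exact mul_le_mul_of_nonneg_left (by linarith) this
end

section
/- Let $R_1, \dots, R_N : [\underline p, \overline p] \to \mathbb{R}$ be unimodal with unique peaks $p_1^\sharp \le p_2^\sharp \le \cdots \le p_N^\sharp$, $N \ge 2$, and $\lambda \in (0,1)$. Let $(p_1^*, \dots, p_N^*)$ maximize $\sum_i R_i(p_i)$ subject to $\max_{i<j}|p_i - p_j| \le \lambda(p_N^\sharp - p_1^\sharp)$. Then there exist $L^* \le R^*$ in $[p_1^\sharp, p_N^\sharp]$ with $R^* - L^* = \lambda(p_N^\sharp - p_1^\sharp)$ such that $p_z^* = L^*$ whenever $p_z^\sharp \le L^*$, $p_z^* = p_z^\sharp$ whenever $p_z^\sharp \in (L^*, R^*)$, and $p_z^* = R^*$ whenever $p_z^\sharp \ge R^*$. -/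
/-- Structure of the constrained optimal prices in the multi-group setting:
the optimal prices are obtained by clipping the unconstrained optimal prices
to a window of width `λ (p_N^♯ - p_1^♯)`. -/
theorem multigroup_constrained_opt_structure
    (N : ℕ) (hN : 2 ≤ N)
    (pl pu : ℝ) (hpl : pl ≤ pu)
    (R : Fin N → ℝ → ℝ) (ps : Fin N → ℝ) (lam : ℝ)
    (hps : ∀ i, ps i ∈ Set.Icc pl pu)
    (hsorted : ∀ i j : Fin N, i ≤ j → ps i ≤ ps j)
    (hinc : ∀ i : Fin N, ∀ x y, pl ≤ x → x < y → y ≤ ps i → R i x < R i y)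
    (hdec : ∀ i : Fin N, ∀ x y, ps i ≤ x → x < y → y ≤ pu → R i y < R i x)
    (hlam0 : 0 < lam) (hlam1 : lam < 1)
    (pstar : Fin N → ℝ)
    (hpstar : ∀ i, pstar i ∈ Set.Icc pl pu)
    (hfeas : ∀ i j, |pstar i - pstar j| ≤
      lam * (ps ⟨N - 1, by omega⟩ - ps ⟨0, by omega⟩))
    (hopt : ∀ q : Fin N → ℝ, (∀ i, q i ∈ Set.Icc pl pu) →
      (∀ i j, |q i - q j| ≤ lam * (ps ⟨N - 1, by omega⟩ - ps ⟨0, by omega⟩)) →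
      ∑ i, R i (q i) ≤ ∑ i, R i (pstar i)) :
    ∃ Lstar Rstar : ℝ, Lstar ≤ Rstar ∧
      Lstar ∈ Set.Icc (ps ⟨0, by omega⟩) (ps ⟨N - 1, by omega⟩) ∧
      Rstar ∈ Set.Icc (ps ⟨0, by omega⟩) (ps ⟨N - 1, by omega⟩) ∧
      Rstar - Lstar = lam * (ps ⟨N - 1, by omega⟩ - ps ⟨0, by omega⟩) ∧
      ∀ z : Fin N,
        (ps z ≤ Lstar → pstar z = Lstar) ∧
        (Lstar < ps z → ps z < Rstar → pstar z = ps z) ∧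
        (Rstar ≤ ps z → pstar z = Rstar) := by
  have hne : (Finset.univ : Finset (Fin N)).Nonempty :=
    ⟨⟨0, by omega⟩, Finset.mem_univ _⟩
  set i0 : Fin N := ⟨0, by omega⟩ with hi0def
  set iN : Fin N := ⟨N - 1, by omega⟩ with hiNdef
  have hle0 : ∀ z : Fin N, i0 ≤ z := by
    intro z; simp [hi0def, Fin.le_def]
  have hleN : ∀ z : Fin N, z ≤ iN := by
    intro z; simp only [hiNdef, Fin.le_def]; omega
  have h1N : ps i0 ≤ ps iN := hsorted _ _ (hle0 iN)
  set w : ℝ := lam * (ps iN - ps i0) with hwdef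
  have hw0 : 0 ≤ w := by
    have := hfeas i0 i0
    simpa using this
  -- key exchange lemma: modifying one coordinate cannot improve the sum
  have key : ∀ (z : Fin N) (v : ℝ), pl ≤ v → v ≤ pu →
      (∀ i, |v - pstar i| ≤ w) → R z v ≤ R z (pstar z) := by
    intro z v hv1 hv2 hvfeas
    have hq := hopt (Function.update pstar z v) ?_ ?_
    · have e1 : ∑ i, R i (Function.update pstar z v i)
          = R z v + ∑ i ∈ Finset.univ.erase z, R i (pstar i) := by
        rw [← Finset.add_sum_erase Finset.univ
          (fun i => R i (Function.update pstar z v i)) (Finset.mem_univ z)]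
        congr 1
        · rw [Function.update_self]
        · apply Finset.sum_congr rfl
          intro i hi
          rw [Function.update_of_ne (Finset.ne_of_mem_erase hi)]
      have e2 : ∑ i, R i (pstar i)
          = R z (pstar z) + ∑ i ∈ Finset.univ.erase z, R i (pstar i) :=
        (Finset.add_sum_erase Finset.univ (fun i => R i (pstar i))
          (Finset.mem_univ z)).symm
      rw [e1, e2] at hq
      linarith
    · intro i
      rcases eq_or_ne i z with rfl | hi
      · rw [Function.update_self]; exact ⟨hv1, hv2⟩
      · rw [Function.update_of_ne hi]; exact hpstar i
    · intro i j
      rcases eq_or_ne i z with hi | hi <;> rcases eq_or_ne j z with hj | hj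
      · rw [hi, hj]; simpa using hw0
      · rw [hi, Function.update_self, Function.update_of_ne hj]
        exact hvfeas j
      · rw [hj, Function.update_of_ne hi, Function.update_self, abs_sub_comm]
        exact hvfeas i
      · rw [Function.update_of_ne hi, Function.update_of_ne hj]
        exact hfeas i j
  -- min and max of the optimal prices
  set m : ℝ := Finset.univ.inf' hne pstar with hmdef
  set M : ℝ := Finset.univ.sup' hne pstar with hMdef
  obtain ⟨a, -, ha⟩ := Finset.exists_mem_eq_inf' hne pstar
  obtain ⟨b, -, hb⟩ := Finset.exists_mem_eq_sup' hne pstar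
  rw [← hmdef] at ha
  rw [← hMdef] at hb
  have hm_le : ∀ i, m ≤ pstar i := fun i => Finset.inf'_le _ (Finset.mem_univ i)
  have hle_M : ∀ i, pstar i ≤ M := fun i => Finset.le_sup' _ (Finset.mem_univ i)
  have hmM : m ≤ M := (hm_le b).trans_eq hb.symm
  have hpl_m : pl ≤ m := ha ▸ (hpstar a).1
  have hM_pu : M ≤ pu := hb ▸ (hpstar b).2
  have hMm : M - m ≤ w := by
    have h := hfeas b a
    rw [← ha, ← hb] at h
    exact (le_abs_self _).trans h
  -- every optimal price is the clip of its peak to [m, M]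
  have clip : ∀ z, pstar z = max m (min M (ps z)) := by
    intro z
    set v := max m (min M (ps z)) with hvdef
    have hmv : m ≤ v := le_max_left _ _
    have hvM : v ≤ M := max_le hmM (min_le_left _ _)
    have hkey : R z v ≤ R z (pstar z) := by
      refine key z v (hpl_m.trans hmv) (hvM.trans hM_pu) ?_
      intro i
      rw [abs_sub_le_iff]
      constructor <;>
        · have h1 := hm_le i; have h2 := hle_M i; linarith
    by_contra hne'
    rcases lt_or_gt_of_ne hne' with hlt | hgt
    · -- pstar z < v : then v = min M (ps z) ≤ ps z
      have h1 : m < min M (ps z) := by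
        by_contra h
        push_neg at h
        have hv : v = m := max_eq_left h
        have := hm_le z
        rw [hv] at hlt
        linarith
      have hv : v = min M (ps z) := max_eq_right h1.le
      have hvps : v ≤ ps z := hv ▸ min_le_right _ _
      have := hinc z (pstar z) v (hpstar z).1 hlt hvps
      linarith
    · -- v < pstar z : then v = max m (ps z) ≥ ps z
      have hvM' : v < M := lt_of_lt_of_le hgt (hle_M z)
      have hpszM : ps z < M := by
        by_contra h
        push_neg at h
        have : min M (ps z) = M := min_eq_left h
        rw [hvdef, this] at hvM'
        have := le_max_right m M
        linarith
      have hv : v = max m (ps z) := by rw [hvdef, min_eq_right hpszM.le]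
      have hpsv : ps z ≤ v := hv ▸ le_max_right _ _
      have := hdec z v (pstar z) hpsv hgt (hpstar z).2
      linarith
  rcases eq_or_lt_of_le h1N with heq | hlt
  · -- degenerate case: all peaks coincide
    have hweq : w = 0 := by rw [hwdef, ← heq]; ring
    have hpsz : ∀ z, ps z = ps i0 := fun z =>
      le_antisymm ((hsorted z iN (hleN z)).trans heq.symm.le) (hsorted i0 z (hle0 z))
    have hall : ∀ z, pstar z = pstar i0 := by
      intro z
      have h := hfeas z i0
      rw [hweq] at h
      have := abs_nonneg (pstar z - pstar i0)
      have h0 : |pstar z - pstar i0| = 0 := le_antisymm h this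
      have := abs_eq_zero.mp h0
      linarith
    have hc : pstar i0 = ps i0 := by
      by_contra hcne
      have hq := hopt (fun _ => ps i0) (fun i => hps i0) ?_
      · have e3 : ∑ i, R i (pstar i) = ∑ i, R i (pstar i0) :=
          Finset.sum_congr rfl (fun i _ => by rw [hall i])
        have hstrict : ∑ i, R i (pstar i0) < ∑ i, R i (ps i0) := by
          apply Finset.sum_lt_sum_of_nonempty hne
          intro i _
          rcases lt_or_gt_of_ne hcne with h | h
          · exact hinc i (pstar i0) (ps i0) (hpstar i0).1 h (by rw [hpsz i])
          · exact hdec i (ps i0) (pstar i0) (by rw [hpsz i]) h (hpstar i0).2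
        rw [e3] at hq
        linarith
      · intro i j
        rw [hweq]
        simp
    refine ⟨ps i0, ps i0, le_refl _, ⟨le_refl _, h1N⟩, ⟨le_refl _, h1N⟩,
      by rw [hweq]; ring, ?_⟩
    intro z
    refine ⟨fun _ => (hall z).trans hc, fun h1 _ => absurd h1 (by rw [hpsz z]; exact lt_irrefl _),
      fun _ => (hall z).trans hc⟩
  · -- main case: ps i0 < ps iN
    have hwpos : 0 < w := mul_pos hlam0 (by linarith)
    have hwlt : w < ps iN - ps i0 := by
      rw [hwdef]
      nlinarith
    rcases eq_or_lt_of_le hmM with hMeq | hmlt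
    · -- all optimal prices equal: impossible
      exfalso
      rcases lt_or_ge m (ps iN) with hcase | hcase
      · set v := min (ps iN) (m + w) with hvdef
        have hmv : m < v := lt_min hcase (by linarith)
        have hvpsN : v ≤ ps iN := min_le_left _ _
        have hk := key iN v (hpl_m.trans hmv.le) (hvpsN.trans (hps iN).2) ?_
        · have hps_iN : pstar iN = m := le_antisymm (hMeq ▸ hle_M iN) (hm_le iN)
          have := hinc iN m v hpl_m hmv hvpsN
          rw [hps_iN] at hk
          linarith
        · intro i
          have h1 := hm_le i
          have h2 := hle_M i
          have h2' : pstar i ≤ m := by rw [hMeq]; exact h2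
          rw [abs_sub_le_iff]
          constructor
          · have : v ≤ m + w := min_le_right _ _
            linarith
          · linarith
      · -- ps iN ≤ m, so ps i0 < m
        have h0m : ps i0 < m := lt_of_lt_of_le hlt hcase
        set v := max (ps i0) (m - w) with hvdef
        have hvm : v < m := max_lt h0m (by linarith)
        have h0v : ps i0 ≤ v := le_max_left _ _
        have hk := key i0 v ((hps i0).1.trans h0v) (hvm.le.trans (hmM.trans hM_pu)) ?_
        · have hps_i0 : pstar i0 = m := le_antisymm (hMeq ▸ hle_M i0) (hm_le i0)
          have := hdec i0 v m h0v hvm (le_trans hmM hM_pu)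
          rw [hps_i0] at hk
          linarith
        · intro i
          have h1 := hm_le i
          have h2 := hle_M i
          have h2' : pstar i ≤ m := by rw [hMeq]; exact h2
          rw [abs_sub_le_iff]
          constructor
          · linarith
          · have : m - w ≤ v := le_max_right _ _
            linarith
    · -- m < M
      have hpsa : ps a ≤ m := by
        have hc := clip a
        rw [← ha] at hc
        have h3 : min M (ps a) ≤ m := by
          by_contra h
          push_neg at h
          rw [max_eq_right h.le] at hc
          linarith
        by_contra h
        push_neg at h
        exact absurd h3 (not_le.mpr (lt_min hmlt h))
      have hpsb : M ≤ ps b := by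
        have hc := clip b
        rw [← hb] at hc
        have h3 : M ≤ min M (ps b) := by
          by_contra h
          push_neg at h
          have := max_lt hmlt h
          rw [← hc] at this
          exact lt_irrefl _ this
        exact (le_min_iff.mp h3).2
      have hp1m : ps i0 ≤ m := (hsorted i0 a (hle0 a)).trans hpsa
      have hMpN : M ≤ ps iN := hpsb.trans (hsorted b iN (hleN b))
      have hps_i0 : pstar i0 = m := by
        rw [clip i0, min_eq_right (hp1m.trans hmlt.le), max_eq_left hp1m]
      have hps_iN : pstar iN = M := by
        rw [clip iN, min_eq_left hMpN, max_eq_right hmlt.le]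
      -- the window has full width
      have hweq : M - m = w := by
        by_contra h
        have hMmlt : M - m < w := lt_of_le_of_ne hMm h
        rcases lt_or_ge (ps i0) m with hcase | hcase
        · set v := max (ps i0) (M - w) with hvdef
          have hvm : v < m := max_lt hcase (by linarith)
          have h0v : ps i0 ≤ v := le_max_left _ _
          have hk := key i0 v ((hps i0).1.trans h0v)
            (hvm.le.trans (hmM.trans hM_pu)) ?_
          · have := hdec i0 v m h0v hvm (hmM.trans hM_pu)
            rw [hps_i0] at hk
            linarith
          · intro i
            have h1 := hm_le i
            have h2 := hle_M i
            rw [abs_sub_le_iff]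
            constructor
            · linarith
            · have : M - w ≤ v := le_max_right _ _
              linarith
        · -- m = ps i0, so M < ps iN
          have hm1 : m = ps i0 := le_antisymm (le_of_not_gt (fun hh => absurd hcase (not_le.mpr hh))) hp1m
          have hMlt : M < ps iN := by
            rw [hm1] at hMmlt
            linarith
          set v := min (ps iN) (m + w) with hvdef
          have hMv : M < v := lt_min hMlt (by linarith)
          have hvpsN : v ≤ ps iN := min_le_left _ _
          have hk := key iN v (hpl_m.trans (hmM.trans hMv.le))
            (hvpsN.trans (hps iN).2) ?_
          · have := hinc iN M v (hpl_m.trans hmM) hMv hvpsN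
            rw [hps_iN] at hk
            linarith
          · intro i
            have h1 := hm_le i
            have h2 := hle_M i
            rw [abs_sub_le_iff]
            constructor
            · have : v ≤ m + w := min_le_right _ _
              linarith
            · linarith
      refine ⟨m, M, hmM, ⟨hp1m, hmM.trans hMpN⟩, ⟨hp1m.trans hmM, hMpN⟩,
        hweq, ?_⟩
      intro z
      refine ⟨?_, ?_, ?_⟩
      · intro hz
        rw [clip z, max_eq_left ((min_le_right _ _).trans hz)]
      · intro h1 h2
        rw [clip z, min_eq_right h2.le, max_eq_right h1.le]
      · intro hz
        rw [clip z, min_eq_left hz, max_eq_right hmlt.le]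
end
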